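/- arXiv:1809.01447 — 4 statements merged into one kernel-verified Lean document; each statement's English description precedes it below -/
import Mathlib

section
/- Let v = (v₁,v₂) ∈ ℝ², set h = 1 + v₁² + v₂², and let B_{jℓs}(v) = ∑_{i=1}^{3} (∂²Ψᵢ/∂v_ℓ∂v_s)(v) (∂Ψᵢ/∂v_j)(v) for j, ℓ, s ∈ {1,2}. Then for every real 2 × 3 matrix G = (G_{jk}) (j ∈ {1,2}, k ∈ {1,2,3}) and every ℓ ∈ {1,2}: −∑_{j,s∈{1,2}} ∑_{k=1}^{3} B_{jℓs}(v) G_{jk} G_{sk} = (8 v_ℓ / h³) ∑_{j∈{1,2}} ∑_{k=1}^{3} G_{jk}². -/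
noncomputable section

/-- Inverse stereographic projection `Ψ : ℝ² → S² ⊆ ℝ³`. -/
def Psi (v : Fin 2 → ℝ) : Fin 3 → ℝ :=
  ![2 * v 0 / (1 + v 0 ^ 2 + v 1 ^ 2),
    2 * v 1 / (1 + v 0 ^ 2 + v 1 ^ 2),
    (1 - v 0 ^ 2 - v 1 ^ 2) / (1 + v 0 ^ 2 + v 1 ^ 2)]

/-- `(∂Ψᵢ/∂v_j)(w)`. -/
def psiD (j : Fin 2) (i : Fin 3) (w : Fin 2 → ℝ) : ℝ :=
  lineDeriv ℝ (fun u => Psi u i) w (Pi.single j 1)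

/-- `B_{jℓs} = ∑ᵢ (∂²Ψᵢ/∂v_ℓ∂v_s)(∂Ψᵢ/∂v_j)`. -/
def Bcoef (j l s : Fin 2) (v : Fin 2 → ℝ) : ℝ :=
  ∑ i : Fin 3, lineDeriv ℝ (fun w => psiD s i w) v (Pi.single l 1) * psiD j i v

def Hh (w : Fin 2 → ℝ) : ℝ := 1 + w 0 ^ 2 + w 1 ^ 2

lemma Hh_ne (w : Fin 2 → ℝ) : Hh w ≠ 0 := by unfold Hh; positivity

lemma quadD (a b c : ℝ) : HasDerivAt (fun t : ℝ => a + b * t + c * t ^ 2) b 0 := by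
  have h1 : HasDerivAt (fun t : ℝ => t) 1 0 := hasDerivAt_id 0
  have h2 := ((h1.const_mul b).const_add a).add ((h1.pow 2).const_mul c)
  exact h2.congr_deriv (by simp)

lemma quadsq (d e : ℝ) : HasDerivAt (fun t : ℝ => (d + e * t + t ^ 2) ^ 2) (2 * d * e) 0 := by
  have h : HasDerivAt (fun t : ℝ => d + e * t + t ^ 2) e 0 := by
    have := quadD d e 1
    simpa using this
  have h2 := h.pow 2
  norm_num at h2
  exact h2

lemma dq1 (a b c d e f : ℝ) (hd : d ≠ 0) :
    deriv (fun t : ℝ => (a + b * t + c * t ^ 2) / (d + e * t + f * t ^ 2)) 0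
      = (b * d - a * e) / d ^ 2 := by
  have h := (quadD a b c).div (quadD d e f) (by simpa using hd)
  refine h.deriv.trans ?_
  norm_num

lemma dq2 (a b c d e : ℝ) (hd : d ≠ 0) :
    deriv (fun t : ℝ => (a + b * t + c * t ^ 2) / (d + e * t + t ^ 2) ^ 2) 0
      = (b * d - 2 * a * e) / d ^ 3 := by
  have h := (quadD a b c).div (quadsq d e) (by simpa using pow_ne_zero 2 hd)
  refine h.deriv.trans ?_
  norm_num
  field_simp

lemma line_apply00 (v : Fin 2 → ℝ) (t : ℝ) :
    (v + t • (Pi.single 0 1 : Fin 2 → ℝ)) 0 = v 0 + t := by simp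

lemma line_apply01 (v : Fin 2 → ℝ) (t : ℝ) :
    (v + t • (Pi.single 0 1 : Fin 2 → ℝ)) 1 = v 1 := by simp [Pi.single_apply]

lemma line_apply10 (v : Fin 2 → ℝ) (t : ℝ) :
    (v + t • (Pi.single 1 1 : Fin 2 → ℝ)) 0 = v 0 := by simp [Pi.single_apply]

lemma line_apply11 (v : Fin 2 → ℝ) (t : ℝ) :
    (v + t • (Pi.single 1 1 : Fin 2 → ℝ)) 1 = v 1 + t := by simp

/-- generic first derivative of quadratic over `Hh`, direction 0 -/
lemma G0 (a0 a1 a2 a3 a4 a5 : ℝ) (v : Fin 2 → ℝ) :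
    lineDeriv ℝ (fun w => (a0 + a1 * w 0 + a2 * w 1 + a3 * w 0 ^ 2 + a4 * (w 0 * w 1)
        + a5 * w 1 ^ 2) / Hh w) v (Pi.single 0 1)
      = ((a1 + 2 * a3 * v 0 + a4 * v 1) * Hh v
          - (a0 + a1 * v 0 + a2 * v 1 + a3 * v 0 ^ 2 + a4 * (v 0 * v 1) + a5 * v 1 ^ 2)
            * (2 * v 0)) / Hh v ^ 2 := by
  have hfun : (fun t : ℝ => (fun w : Fin 2 → ℝ => (a0 + a1 * w 0 + a2 * w 1 + a3 * w 0 ^ 2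
        + a4 * (w 0 * w 1) + a5 * w 1 ^ 2) / Hh w) (v + t • (Pi.single 0 1 : Fin 2 → ℝ)))
      = fun t : ℝ => ((a0 + a1 * v 0 + a2 * v 1 + a3 * v 0 ^ 2 + a4 * (v 0 * v 1) + a5 * v 1 ^ 2)
          + (a1 + 2 * a3 * v 0 + a4 * v 1) * t + a3 * t ^ 2)
        / (Hh v + (2 * v 0) * t + 1 * t ^ 2) := by
    funext t
    simp only [Hh, line_apply00, line_apply01]
    congr 1 <;> ring
  show deriv (fun t : ℝ => _) 0 = _
  rw [hfun, dq1 _ _ _ _ _ _ (Hh_ne v)]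

/-- generic first derivative of quadratic over `Hh`, direction 1 -/
lemma G1 (a0 a1 a2 a3 a4 a5 : ℝ) (v : Fin 2 → ℝ) :
    lineDeriv ℝ (fun w => (a0 + a1 * w 0 + a2 * w 1 + a3 * w 0 ^ 2 + a4 * (w 0 * w 1)
        + a5 * w 1 ^ 2) / Hh w) v (Pi.single 1 1)
      = ((a2 + a4 * v 0 + 2 * a5 * v 1) * Hh v
          - (a0 + a1 * v 0 + a2 * v 1 + a3 * v 0 ^ 2 + a4 * (v 0 * v 1) + a5 * v 1 ^ 2)
            * (2 * v 1)) / Hh v ^ 2 := by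
  have hfun : (fun t : ℝ => (fun w : Fin 2 → ℝ => (a0 + a1 * w 0 + a2 * w 1 + a3 * w 0 ^ 2
        + a4 * (w 0 * w 1) + a5 * w 1 ^ 2) / Hh w) (v + t • (Pi.single 1 1 : Fin 2 → ℝ)))
      = fun t : ℝ => ((a0 + a1 * v 0 + a2 * v 1 + a3 * v 0 ^ 2 + a4 * (v 0 * v 1) + a5 * v 1 ^ 2)
          + (a2 + a4 * v 0 + 2 * a5 * v 1) * t + a5 * t ^ 2)
        / (Hh v + (2 * v 1) * t + 1 * t ^ 2) := by
    funext t
    simp only [Hh, line_apply10, line_apply11]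
    congr 1 <;> ring
  show deriv (fun t : ℝ => _) 0 = _
  rw [hfun, dq1 _ _ _ _ _ _ (Hh_ne v)]

/-- generic derivative of quadratic over `Hh ^ 2`, direction 0 -/
lemma L0 (a0 a1 a2 a3 a4 a5 : ℝ) (v : Fin 2 → ℝ) :
    lineDeriv ℝ (fun w => (a0 + a1 * w 0 + a2 * w 1 + a3 * w 0 ^ 2 + a4 * (w 0 * w 1)
        + a5 * w 1 ^ 2) / Hh w ^ 2) v (Pi.single 0 1)
      = ((a1 + 2 * a3 * v 0 + a4 * v 1) * Hh v
          - 2 * (a0 + a1 * v 0 + a2 * v 1 + a3 * v 0 ^ 2 + a4 * (v 0 * v 1) + a5 * v 1 ^ 2)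
            * (2 * v 0)) / Hh v ^ 3 := by
  have hfun : (fun t : ℝ => (fun w : Fin 2 → ℝ => (a0 + a1 * w 0 + a2 * w 1 + a3 * w 0 ^ 2
        + a4 * (w 0 * w 1) + a5 * w 1 ^ 2) / Hh w ^ 2) (v + t • (Pi.single 0 1 : Fin 2 → ℝ)))
      = fun t : ℝ => ((a0 + a1 * v 0 + a2 * v 1 + a3 * v 0 ^ 2 + a4 * (v 0 * v 1) + a5 * v 1 ^ 2)
          + (a1 + 2 * a3 * v 0 + a4 * v 1) * t + a3 * t ^ 2)
        / (Hh v + (2 * v 0) * t + t ^ 2) ^ 2 := by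
    funext t
    simp only [Hh, line_apply00, line_apply01]
    congr 1 <;> ring
  show deriv (fun t : ℝ => _) 0 = _
  rw [hfun, dq2 _ _ _ _ _ (Hh_ne v)]

/-- generic derivative of quadratic over `Hh ^ 2`, direction 1 -/
lemma L1 (a0 a1 a2 a3 a4 a5 : ℝ) (v : Fin 2 → ℝ) :
    lineDeriv ℝ (fun w => (a0 + a1 * w 0 + a2 * w 1 + a3 * w 0 ^ 2 + a4 * (w 0 * w 1)
        + a5 * w 1 ^ 2) / Hh w ^ 2) v (Pi.single 1 1)
      = ((a2 + a4 * v 0 + 2 * a5 * v 1) * Hh v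
          - 2 * (a0 + a1 * v 0 + a2 * v 1 + a3 * v 0 ^ 2 + a4 * (v 0 * v 1) + a5 * v 1 ^ 2)
            * (2 * v 1)) / Hh v ^ 3 := by
  have hfun : (fun t : ℝ => (fun w : Fin 2 → ℝ => (a0 + a1 * w 0 + a2 * w 1 + a3 * w 0 ^ 2
        + a4 * (w 0 * w 1) + a5 * w 1 ^ 2) / Hh w ^ 2) (v + t • (Pi.single 1 1 : Fin 2 → ℝ)))
      = fun t : ℝ => ((a0 + a1 * v 0 + a2 * v 1 + a3 * v 0 ^ 2 + a4 * (v 0 * v 1) + a5 * v 1 ^ 2)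
          + (a2 + a4 * v 0 + 2 * a5 * v 1) * t + a5 * t ^ 2)
        / (Hh v + (2 * v 1) * t + t ^ 2) ^ 2 := by
    funext t
    simp only [Hh, line_apply10, line_apply11]
    congr 1 <;> ring
  show deriv (fun t : ℝ => _) 0 = _
  rw [hfun, dq2 _ _ _ _ _ (Hh_ne v)]

lemma Psi0_eq : (fun u : Fin 2 → ℝ => Psi u 0)
    = fun u => (0 + 2 * u 0 + 0 * u 1 + 0 * u 0 ^ 2 + 0 * (u 0 * u 1) + 0 * u 1 ^ 2) / Hh u := by
  funext u
  simp only [Psi, Hh, Matrix.cons_val_zero]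
  congr 1 <;> ring

lemma Psi1_eq : (fun u : Fin 2 → ℝ => Psi u 1)
    = fun u => (0 + 0 * u 0 + 2 * u 1 + 0 * u 0 ^ 2 + 0 * (u 0 * u 1) + 0 * u 1 ^ 2) / Hh u := by
  funext u
  simp only [Psi, Hh, Matrix.cons_val_one, Matrix.head_cons, Matrix.cons_val_zero]
  congr 1 <;> ring

lemma Psi2_eq : (fun u : Fin 2 → ℝ => Psi u 2)
    = fun u => (1 + 0 * u 0 + 0 * u 1 + (-1) * u 0 ^ 2 + 0 * (u 0 * u 1) + (-1) * u 1 ^ 2) / Hh u := by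
  funext u
  have h : Psi u 2 = (1 - u 0 ^ 2 - u 1 ^ 2) / (1 + u 0 ^ 2 + u 1 ^ 2) := rfl
  rw [h]
  simp only [Hh]
  congr 1 <;> ring

lemma psiD00 : (psiD 0 0 : (Fin 2 → ℝ) → ℝ)
    = fun w => (2 + 0 * w 0 + 0 * w 1 + (-2) * w 0 ^ 2 + 0 * (w 0 * w 1) + 2 * w 1 ^ 2) / Hh w ^ 2 := by
  funext w
  unfold psiD
  rw [Psi0_eq, G0]
  rw [div_eq_div_iff (pow_ne_zero _ (Hh_ne w)) (pow_ne_zero _ (Hh_ne w))]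
  simp only [Hh]; ring

lemma psiD01 : (psiD 0 1 : (Fin 2 → ℝ) → ℝ)
    = fun w => (0 + 0 * w 0 + 0 * w 1 + 0 * w 0 ^ 2 + (-4) * (w 0 * w 1) + 0 * w 1 ^ 2) / Hh w ^ 2 := by
  funext w
  unfold psiD
  rw [Psi1_eq, G0]
  rw [div_eq_div_iff (pow_ne_zero _ (Hh_ne w)) (pow_ne_zero _ (Hh_ne w))]
  simp only [Hh]; ring

lemma psiD02 : (psiD 0 2 : (Fin 2 → ℝ) → ℝ)
    = fun w => (0 + (-4) * w 0 + 0 * w 1 + 0 * w 0 ^ 2 + 0 * (w 0 * w 1) + 0 * w 1 ^ 2) / Hh w ^ 2 := by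
  funext w
  unfold psiD
  rw [Psi2_eq, G0]
  rw [div_eq_div_iff (pow_ne_zero _ (Hh_ne w)) (pow_ne_zero _ (Hh_ne w))]
  simp only [Hh]; ring

lemma psiD10 : (psiD 1 0 : (Fin 2 → ℝ) → ℝ)
    = fun w => (0 + 0 * w 0 + 0 * w 1 + 0 * w 0 ^ 2 + (-4) * (w 0 * w 1) + 0 * w 1 ^ 2) / Hh w ^ 2 := by
  funext w
  unfold psiD
  rw [Psi0_eq, G1]
  rw [div_eq_div_iff (pow_ne_zero _ (Hh_ne w)) (pow_ne_zero _ (Hh_ne w))]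
  simp only [Hh]; ring

lemma psiD11 : (psiD 1 1 : (Fin 2 → ℝ) → ℝ)
    = fun w => (2 + 0 * w 0 + 0 * w 1 + 2 * w 0 ^ 2 + 0 * (w 0 * w 1) + (-2) * w 1 ^ 2) / Hh w ^ 2 := by
  funext w
  unfold psiD
  rw [Psi1_eq, G1]
  rw [div_eq_div_iff (pow_ne_zero _ (Hh_ne w)) (pow_ne_zero _ (Hh_ne w))]
  simp only [Hh]; ring

lemma psiD12 : (psiD 1 2 : (Fin 2 → ℝ) → ℝ)
    = fun w => (0 + 0 * w 0 + (-4) * w 1 + 0 * w 0 ^ 2 + 0 * (w 0 * w 1) + 0 * w 1 ^ 2) / Hh w ^ 2 := by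
  funext w
  unfold psiD
  rw [Psi2_eq, G1]
  rw [div_eq_div_iff (pow_ne_zero _ (Hh_ne w)) (pow_ne_zero _ (Hh_ne w))]
  simp only [Hh]; ring


lemma B000 (v : Fin 2 → ℝ) : Bcoef 0 0 0 v = (-8 * v 0) / Hh v ^ 3 := by
  have hne : (1 : ℝ) + v 0 ^ 2 + v 1 ^ 2 ≠ 0 := by positivity
  simp only [Bcoef, Fin.sum_univ_three, psiD00, psiD01, psiD02, psiD10, psiD11, psiD12]
  simp only [L0]
  simp only [Hh]
  field_simp
  ring

lemma B001 (v : Fin 2 → ℝ) : Bcoef 0 0 1 v = (-8 * v 1) / Hh v ^ 3 := by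
  have hne : (1 : ℝ) + v 0 ^ 2 + v 1 ^ 2 ≠ 0 := by positivity
  simp only [Bcoef, Fin.sum_univ_three, psiD00, psiD01, psiD02, psiD10, psiD11, psiD12]
  simp only [L0]
  simp only [Hh]
  field_simp
  ring

lemma B010 (v : Fin 2 → ℝ) : Bcoef 0 1 0 v = (-8 * v 1) / Hh v ^ 3 := by
  have hne : (1 : ℝ) + v 0 ^ 2 + v 1 ^ 2 ≠ 0 := by positivity
  simp only [Bcoef, Fin.sum_univ_three, psiD00, psiD01, psiD02, psiD10, psiD11, psiD12]
  simp only [L1]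
  simp only [Hh]
  field_simp
  ring

lemma B011 (v : Fin 2 → ℝ) : Bcoef 0 1 1 v = (8 * v 0) / Hh v ^ 3 := by
  have hne : (1 : ℝ) + v 0 ^ 2 + v 1 ^ 2 ≠ 0 := by positivity
  simp only [Bcoef, Fin.sum_univ_three, psiD00, psiD01, psiD02, psiD10, psiD11, psiD12]
  simp only [L1]
  simp only [Hh]
  field_simp
  ring

lemma B100 (v : Fin 2 → ℝ) : Bcoef 1 0 0 v = (8 * v 1) / Hh v ^ 3 := by
  have hne : (1 : ℝ) + v 0 ^ 2 + v 1 ^ 2 ≠ 0 := by positivity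
  simp only [Bcoef, Fin.sum_univ_three, psiD00, psiD01, psiD02, psiD10, psiD11, psiD12]
  simp only [L0]
  simp only [Hh]
  field_simp
  ring

lemma B101 (v : Fin 2 → ℝ) : Bcoef 1 0 1 v = (-8 * v 0) / Hh v ^ 3 := by
  have hne : (1 : ℝ) + v 0 ^ 2 + v 1 ^ 2 ≠ 0 := by positivity
  simp only [Bcoef, Fin.sum_univ_three, psiD00, psiD01, psiD02, psiD10, psiD11, psiD12]
  simp only [L0]
  simp only [Hh]
  field_simp
  ring

lemma B110 (v : Fin 2 → ℝ) : Bcoef 1 1 0 v = (-8 * v 0) / Hh v ^ 3 := by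
  have hne : (1 : ℝ) + v 0 ^ 2 + v 1 ^ 2 ≠ 0 := by positivity
  simp only [Bcoef, Fin.sum_univ_three, psiD00, psiD01, psiD02, psiD10, psiD11, psiD12]
  simp only [L1]
  simp only [Hh]
  field_simp
  ring

lemma B111 (v : Fin 2 → ℝ) : Bcoef 1 1 1 v = (-8 * v 1) / Hh v ^ 3 := by
  have hne : (1 : ℝ) + v 0 ^ 2 + v 1 ^ 2 ≠ 0 := by positivity
  simp only [Bcoef, Fin.sum_univ_three, psiD00, psiD01, psiD02, psiD10, psiD11, psiD12]
  simp only [L1]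
  simp only [Hh]
  field_simp
  ring

set_option maxHeartbeats 1000000 in
/-- `−∑_{jℓs} B_{jℓs} G_{jk} G_{sk}` theorem. -/
theorem statement5 (v : Fin 2 → ℝ) (G : Matrix (Fin 2) (Fin 3) ℝ) (l : Fin 2) :
    -∑ j : Fin 2, ∑ s : Fin 2, ∑ k : Fin 3, Bcoef j l s v * G j k * G s k =
      8 * v l / (1 + v 0 ^ 2 + v 1 ^ 2) ^ 3 * ∑ j : Fin 2, ∑ k : Fin 3, (G j k) ^ 2 := by
  have hne : (1 : ℝ) + v 0 ^ 2 + v 1 ^ 2 ≠ 0 := by positivity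
  fin_cases l <;>
  · simp only [Fin.sum_univ_two, Fin.sum_univ_three, Fin.mk_zero, Fin.mk_one, Fin.isValue,
      B000, B001, B010, B011, B100, B101, B110, B111, Hh]
    ring

end
end

section
/- Let U ⊆ ℝ³ × ℝ be an open set, let H : U → ℝ³ be continuous, and let d : U → ℝ³ be C² satisfying pointwise on U the equation ∂ₜd − Δd = |∇d|² d + (H·d)H − (H·d)² d (without assuming |d| = 1). Then the scalar function g = |d|² − 1 satisfies pointwise on U the linear parabolic equation ∂ₜg − Δg = 2(|∇d|² − (H·d)²) g. -/
noncomputable section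

/-- Space-time `ℝ³ × ℝ`. -/
abbrev SpaceTime := (Fin 3 → ℝ) × ℝ

/-- Euclidean dot product on `ℝ³`. -/
def dot3 (a b : Fin 3 → ℝ) : ℝ := ∑ i, a i * b i

/-- Time partial derivative `∂ₜu`. -/
def pt (u : SpaceTime → ℝ) (p : SpaceTime) : ℝ := lineDeriv ℝ u p ((0 : Fin 3 → ℝ), (1 : ℝ))

/-- Spatial partial derivative `∂ₖu`. -/
def px (k : Fin 3) (u : SpaceTime → ℝ) (p : SpaceTime) : ℝ :=
  lineDeriv ℝ u p (Pi.single k 1, (0 : ℝ))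

/-- Spatial Laplacian `Δu = ∑ₖ ∂ₖ∂ₖu`. -/
def lap (u : SpaceTime → ℝ) (p : SpaceTime) : ℝ := ∑ k, px k (px k u) p

/-- `|∇d|²`, the sum of the squares of all spatial partial derivatives of all components. -/
def gradSq (d : SpaceTime → Fin 3 → ℝ) (p : SpaceTime) : ℝ :=
  ∑ i, ∑ k, (px k (fun q => d q i) p) ^ 2

/-- `u` is C² on `U`: `u`, `∂ₜu` and all first and second spatial partial derivatives
exist and are continuous on `U`. -/
def IsC2On (u : SpaceTime → ℝ) (U : Set SpaceTime) : Prop :=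
  ContinuousOn u U ∧
  (∀ p ∈ U, LineDifferentiableAt ℝ u p ((0 : Fin 3 → ℝ), (1 : ℝ))) ∧
  ContinuousOn (pt u) U ∧
  (∀ k : Fin 3,
    (∀ p ∈ U, LineDifferentiableAt ℝ u p (Pi.single k 1, (0 : ℝ))) ∧
    ContinuousOn (px k u) U) ∧
  (∀ k l : Fin 3,
    (∀ p ∈ U, LineDifferentiableAt ℝ (px l u) p (Pi.single k 1, (0 : ℝ))) ∧
    ContinuousOn (px k (px l u)) U)

lemma hld_mul {f g : SpaceTime → ℝ} {a b : ℝ} {x v : SpaceTime}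
    (hf : HasLineDerivAt ℝ f a x v) (hg : HasLineDerivAt ℝ g b x v) :
    HasLineDerivAt ℝ (fun q => f q * g q) (a * g x + f x * b) x v := by
  have h := HasDerivAt.fun_mul hf hg
  show HasDerivAt (fun t : ℝ => f (x + t • v) * g (x + t • v)) (a * g x + f x * b) 0
  simpa using h

lemma hld_sum_mul {f g : Fin 3 → SpaceTime → ℝ} {a b : Fin 3 → ℝ} {x v : SpaceTime}
    (hf : ∀ i, HasLineDerivAt ℝ (f i) (a i) x v)
    (hg : ∀ i, HasLineDerivAt ℝ (g i) (b i) x v) :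
    HasLineDerivAt ℝ (fun q => ∑ i, f i q * g i q)
      (∑ i, (a i * g i x + f i x * b i)) x v := by
  have h : ∀ i ∈ Finset.univ, HasDerivAt (fun t : ℝ => f i (x + t • v) * g i (x + t • v))
      (a i * g i x + f i x * b i) 0 := fun i _ => hld_mul (hf i) (hg i)
  have h2 := HasDerivAt.sum h
  show HasDerivAt (fun t : ℝ => ∑ i, f i (x + t • v) * g i (x + t • v)) _ 0
  exact h2

lemma hld_sub_const {f : SpaceTime → ℝ} {a c : ℝ} {x v : SpaceTime}
    (hf : HasLineDerivAt ℝ f a x v) :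
    HasLineDerivAt ℝ (fun q => f q - c) a x v := by
  show HasDerivAt (fun t : ℝ => f (x + t • v) - c) a 0
  exact HasDerivAt.sub_const c hf

lemma hld_const_mul {f : SpaceTime → ℝ} {a c : ℝ} {x v : SpaceTime}
    (hf : HasLineDerivAt ℝ f a x v) :
    HasLineDerivAt ℝ (fun q => c * f q) (c * a) x v := by
  show HasDerivAt (fun t : ℝ => c * f (x + t • v)) (c * a) 0
  exact HasDerivAt.const_mul c hf

lemma hld_add {f g : SpaceTime → ℝ} {a b : ℝ} {x v : SpaceTime}
    (hf : HasLineDerivAt ℝ f a x v) (hg : HasLineDerivAt ℝ g b x v) :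
    HasLineDerivAt ℝ (fun q => f q + g q) (a + b) x v := by
  show HasDerivAt (fun t : ℝ => f (x + t • v) + g (x + t • v)) (a + b) 0
  exact HasDerivAt.add hf hg

lemma hld_sum {f : Fin 3 → SpaceTime → ℝ} {a : Fin 3 → ℝ} {x v : SpaceTime}
    (h : ∀ i, HasLineDerivAt ℝ (f i) (a i) x v) :
    HasLineDerivAt ℝ (fun q => ∑ i, f i q) (∑ i, a i) x v := by
  show HasDerivAt (fun t : ℝ => ∑ i, f i (x + t • v)) _ 0
  exact HasDerivAt.fun_sum fun i _ => h i

/-- If `d` solves `∂ₜd − Δd = |∇d|² d + (H·d)H − (H·d)² d` (without assuming `|d| = 1`),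
then `g = |d|² − 1` solves `∂ₜg − Δg = 2(|∇d|² − (H·d)²) g`. -/
theorem statement9 (U : Set SpaceTime) (hU : IsOpen U)
    (d H : SpaceTime → Fin 3 → ℝ)
    (hH : ContinuousOn H U)
    (hd : ∀ i : Fin 3, IsC2On (fun p => d p i) U)
    (heq : ∀ p ∈ U, ∀ i : Fin 3,
      pt (fun q => d q i) p - lap (fun q => d q i) p =
        gradSq d p * d p i + dot3 (H p) (d p) * H p i
          - (dot3 (H p) (d p)) ^ 2 * d p i) :
    ∀ p ∈ U,
      pt (fun q => dot3 (d q) (d q) - 1) p - lap (fun q => dot3 (d q) (d q) - 1) p =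
        2 * (gradSq d p - (dot3 (H p) (d p)) ^ 2) * (dot3 (d p) (d p) - 1) := by
  intro p hp
  -- first derivatives of components
  have hdt : ∀ q ∈ U, ∀ i, HasLineDerivAt ℝ (fun r => d r i)
      (pt (fun r => d r i) q) q ((0 : Fin 3 → ℝ), (1 : ℝ)) :=
    fun q hq i => ((hd i).2.1 q hq).hasLineDerivAt
  have hdx : ∀ k : Fin 3, ∀ q ∈ U, ∀ i, HasLineDerivAt ℝ (fun r => d r i)
      (px k (fun r => d r i) q) q (Pi.single k 1, (0 : ℝ)) :=
    fun k q hq i => (((hd i).2.2.2.1 k).1 q hq).hasLineDerivAt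
  have hdxx : ∀ k : Fin 3, ∀ i, HasLineDerivAt ℝ (px k (fun r => d r i))
      (px k (px k (fun r => d r i)) p) p (Pi.single k 1, (0 : ℝ)) :=
    fun k i => (((hd i).2.2.2.2 k k).1 p hp).hasLineDerivAt
  -- the function g, unfolded
  have hgfun : (fun q => dot3 (d q) (d q) - 1) = fun q => (∑ i, d q i * d q i) - 1 := by
    funext q; simp [dot3]
  -- time derivative of g
  have h1 : pt (fun q => dot3 (d q) (d q) - 1) p =
      ∑ i, (pt (fun r => d r i) p * d p i + d p i * pt (fun r => d r i) p) := by
    rw [hgfun]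
    exact (hld_sub_const (hld_sum_mul (hdt p hp) (hdt p hp))).lineDeriv
  -- first spatial derivative of g on U
  have h2 : ∀ k : Fin 3, ∀ q ∈ U, px k (fun r => dot3 (d r) (d r) - 1) q =
      ∑ i, (px k (fun r => d r i) q * d q i + d q i * px k (fun r => d r i) q) := by
    intro k q hq
    rw [hgfun]
    exact (hld_sub_const (hld_sum_mul (hdx k q hq) (hdx k q hq))).lineDeriv
  -- second spatial derivatives of g at p
  have h3 : ∀ k : Fin 3, px k (px k (fun r => dot3 (d r) (d r) - 1)) p =
      ∑ i, ((px k (px k (fun r => d r i)) p * d p i + px k (fun r => d r i) p *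
          px k (fun r => d r i) p)
        + (px k (fun r => d r i) p * px k (fun r => d r i) p
          + d p i * px k (px k (fun r => d r i)) p)) := by
    intro k
    have hF : HasLineDerivAt ℝ
        (fun q => ∑ i, (px k (fun r => d r i) q * d q i + d q i * px k (fun r => d r i) q))
        (∑ i, ((px k (px k (fun r => d r i)) p * d p i + px k (fun r => d r i) p *
            px k (fun r => d r i) p)
          + (px k (fun r => d r i) p * px k (fun r => d r i) p
            + d p i * px k (px k (fun r => d r i)) p))) p (Pi.single k 1, (0 : ℝ)) :=
      hld_sum fun i => hld_add (hld_mul (hdxx k i) (hdx k p hp i))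
        (hld_mul (hdx k p hp i) (hdxx k i))
    have hev : (px k (fun r => dot3 (d r) (d r) - 1)) =ᶠ[nhds p]
        (fun q => ∑ i, (px k (fun r => d r i) q * d q i + d q i * px k (fun r => d r i) q)) := by
      filter_upwards [hU.mem_nhds hp] with q hq
      rw [h2 k q hq]
    exact (hF.congr_of_eventuallyEq hev).lineDeriv
  -- assemble
  have e0 := heq p hp 0
  have e1 := heq p hp 1
  have e2 := heq p hp 2
  rw [h1]
  simp only [lap]
  rw [show (∑ k, px k (px k (fun r => dot3 (d r) (d r) - 1)) p) =
      ∑ k : Fin 3, ∑ i, ((px k (px k (fun r => d r i)) p * d p i + px k (fun r => d r i) p *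
          px k (fun r => d r i) p)
        + (px k (fun r => d r i) p * px k (fun r => d r i) p
          + d p i * px k (px k (fun r => d r i)) p))
      from Finset.sum_congr rfl fun k _ => h3 k]
  simp only [lap, gradSq, dot3, Fin.sum_univ_three] at e0 e1 e2 ⊢
  linear_combination 2 * d p 0 * e0 + 2 * d p 1 * e1 + 2 * d p 2 * e2
end
end

section
/- Let Ω ⊆ ℝ³ be open, T > 0, e ∈ ℝ³ a unit vector, and λ : (0,T) → ℝ continuous. Let d₁, d₂ : Ω × (0,T) → ℝ³ be C² maps with |dᵢ(x,t)| = 1 and dᵢ(x,t)·e > 0 for all (x,t) and i = 1,2, each satisfying pointwise the equation ∂ₜdᵢ − Δdᵢ = |∇dᵢ|² dᵢ + λ(t)²(e·dᵢ)e − λ(t)²(e·dᵢ)² dᵢ. Define ψ = 1 − d₁·d₂, ψᵢ = 1 − dᵢ·e, and Φ = −log(1 − ψ₁) − log(1 − ψ₂) = −log((d₁·e)(d₂·e)). Then at every point of Ω × (0,T): ∇·(e^{−Φ} ∇(e^{Φ}ψ)) − e^{−Φ} ∂ₜ(e^{Φ}ψ) ≥ 0, where ∇· denotes the spatial divergence and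 ∇ the spatial gradient. -/
noncomputable section

/-- `Φ = −log(d₁·e) − log(d₂·e)`. -/
def Phi (d₁ d₂ : SpaceTime → Fin 3 → ℝ) (e : Fin 3 → ℝ) (p : SpaceTime) : ℝ :=
  -Real.log (1 - (1 - dot3 (d₁ p) e)) - Real.log (1 - (1 - dot3 (d₂ p) e))

/-- `e^Φ ψ` with `ψ = 1 − d₁·d₂`. -/
def Fxy (d₁ d₂ : SpaceTime → Fin 3 → ℝ) (e : Fin 3 → ℝ) (p : SpaceTime) : ℝ :=
  Real.exp (Phi d₁ d₂ e p) * (1 - dot3 (d₁ p) (d₂ p))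


section Aux
namespace LDAux

variable {f g : SpaceTime → ℝ} {f' g' : ℝ} {x v : SpaceTime}

lemma hld_const (c : ℝ) : HasLineDerivAt ℝ (fun _ : SpaceTime => c) 0 x v := by
  have : HasDerivAt (fun _ : ℝ => c) 0 0 := hasDerivAt_const _ _
  exact this

lemma hld_add (hf : HasLineDerivAt ℝ f f' x v) (hg : HasLineDerivAt ℝ g g' x v) :
    HasLineDerivAt ℝ (fun y => f y + g y) (f' + g') x v := by
  have hf' : HasDerivAt (fun t : ℝ => f (x + t • v)) f' 0 := hf
  have hg' : HasDerivAt (fun t : ℝ => g (x + t • v)) g' 0 := hg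
  exact hf'.add hg'

lemma hld_neg (hf : HasLineDerivAt ℝ f f' x v) :
    HasLineDerivAt ℝ (fun y => -f y) (-f') x v := by
  have hf' : HasDerivAt (fun t : ℝ => f (x + t • v)) f' 0 := hf
  exact hf'.neg

lemma hld_sub (hf : HasLineDerivAt ℝ f f' x v) (hg : HasLineDerivAt ℝ g g' x v) :
    HasLineDerivAt ℝ (fun y => f y - g y) (f' - g') x v := by
  have hf' : HasDerivAt (fun t : ℝ => f (x + t • v)) f' 0 := hf
  have hg' : HasDerivAt (fun t : ℝ => g (x + t • v)) g' 0 := hg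
  exact hf'.sub hg'

lemma hld_mul (hf : HasLineDerivAt ℝ f f' x v) (hg : HasLineDerivAt ℝ g g' x v) :
    HasLineDerivAt ℝ (fun y => f y * g y) (f' * g x + f x * g') x v := by
  have hf' : HasDerivAt (fun t : ℝ => f (x + t • v)) f' 0 := hf
  have hg' : HasDerivAt (fun t : ℝ => g (x + t • v)) g' 0 := hg
  have := hf'.fun_mul hg'
  simpa [HasLineDerivAt] using this

lemma hld_div (hf : HasLineDerivAt ℝ f f' x v) (hg : HasLineDerivAt ℝ g g' x v)
    (hgx : g x ≠ 0) :
    HasLineDerivAt ℝ (fun y => f y / g y) ((f' * g x - f x * g') / (g x) ^ 2) x v := by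
  have hf' : HasDerivAt (fun t : ℝ => f (x + t • v)) f' 0 := hf
  have hg' : HasDerivAt (fun t : ℝ => g (x + t • v)) g' 0 := hg
  have hgx' : g (x + (0:ℝ) • v) ≠ 0 := by simpa using hgx
  have := hf'.fun_div hg' hgx'
  simpa [HasLineDerivAt] using this

lemma hld_sum {ι : Type*} (s : Finset ι) (F : ι → SpaceTime → ℝ) (F' : ι → ℝ)
    (h : ∀ i ∈ s, HasLineDerivAt ℝ (F i) (F' i) x v) :
    HasLineDerivAt ℝ (fun y => ∑ i ∈ s, F i y) (∑ i ∈ s, F' i) x v := by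
  have h' : ∀ i ∈ s, HasDerivAt (fun t : ℝ => F i (x + t • v)) (F' i) 0 := fun i hi => h i hi
  exact HasDerivAt.fun_sum h'

lemma hld_congr_nhds (h : f =ᶠ[nhds x] g) (hf : HasLineDerivAt ℝ g f' x v) :
    HasLineDerivAt ℝ f f' x v :=
  hf.congr_of_eventuallyEq h

end LDAux
/-- auxiliary: `a(q) = d(q)·e` -/
def av (d : SpaceTime → Fin 3 → ℝ) (e : Fin 3 → ℝ) (q : SpaceTime) : ℝ := dot3 (d q) e

/-- auxiliary: `s(q) = d₁(q)·d₂(q)` -/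
def sv (d₁ d₂ : SpaceTime → Fin 3 → ℝ) (q : SpaceTime) : ℝ := dot3 (d₁ q) (d₂ q)

/-- `G = ψ/(ab)`, the rational-function form of `e^Φ ψ`. -/
def Gv (d₁ d₂ : SpaceTime → Fin 3 → ℝ) (e : Fin 3 → ℝ) (q : SpaceTime) : ℝ :=
  (1 - sv d₁ d₂ q) / (av d₁ e q * av d₂ e q)

/-- `H_k = ∂ₖψ − ψ(∂ₖa/a + ∂ₖb/b)`, the rational form of `e^{-Φ}∂ₖ(e^Φψ)`. -/
def Hv (d₁ d₂ : SpaceTime → Fin 3 → ℝ) (e : Fin 3 → ℝ) (k : Fin 3) (q : SpaceTime) : ℝ :=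
  (0 - ∑ j, (px k (fun q' => d₁ q' j) q * d₂ q j + d₁ q j * px k (fun q' => d₂ q' j) q))
  - (1 - sv d₁ d₂ q) *
      ((∑ j, px k (fun q' => d₁ q' j) q * e j) / av d₁ e q
        + (∑ j, px k (fun q' => d₂ q' j) q * e j) / av d₂ e q)

namespace LDAux

variable {d d₁ d₂ : SpaceTime → Fin 3 → ℝ} {e : Fin 3 → ℝ} {x v : SpaceTime}
  {D D₁ D₂ : Fin 3 → ℝ} {q : SpaceTime}

lemma hld_mul_const {f : SpaceTime → ℝ} {f' : ℝ} (hf : HasLineDerivAt ℝ f f' x v) (c : ℝ) :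
    HasLineDerivAt ℝ (fun y => f y * c) (f' * c) x v := by
  have := hld_mul hf (hld_const (x := x) (v := v) c)
  simpa using this

lemma hld_av (h : ∀ j, HasLineDerivAt ℝ (fun q => d q j) (D j) x v) :
    HasLineDerivAt ℝ (av d e) (∑ j, D j * e j) x v := by
  have : HasLineDerivAt ℝ (fun q => ∑ j, d q j * e j) (∑ j, D j * e j) x v :=
    hld_sum Finset.univ (fun j q => d q j * e j) (fun j => D j * e j)
      (fun j _ => hld_mul_const (h j) (e j))
  exact this

lemma hld_sv (h₁ : ∀ j, HasLineDerivAt ℝ (fun q => d₁ q j) (D₁ j) x v)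
    (h₂ : ∀ j, HasLineDerivAt ℝ (fun q => d₂ q j) (D₂ j) x v) :
    HasLineDerivAt ℝ (sv d₁ d₂) (∑ j, (D₁ j * d₂ x j + d₁ x j * D₂ j)) x v := by
  have : HasLineDerivAt ℝ (fun q => ∑ j, d₁ q j * d₂ q j)
      (∑ j, (D₁ j * d₂ x j + d₁ x j * D₂ j)) x v :=
    hld_sum Finset.univ (fun j q => d₁ q j * d₂ q j) (fun j => D₁ j * d₂ x j + d₁ x j * D₂ j)
      (fun j _ => hld_mul (h₁ j) (h₂ j))
  exact this

lemma hld_Gv (h₁ : ∀ j, HasLineDerivAt ℝ (fun q => d₁ q j) (D₁ j) x v)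
    (h₂ : ∀ j, HasLineDerivAt ℝ (fun q => d₂ q j) (D₂ j) x v)
    (ha : av d₁ e x ≠ 0) (hb : av d₂ e x ≠ 0) :
    HasLineDerivAt ℝ (Gv d₁ d₂ e)
      (((0 - ∑ j, (D₁ j * d₂ x j + d₁ x j * D₂ j)) * (av d₁ e x * av d₂ e x) -
        (1 - sv d₁ d₂ x) * ((∑ j, D₁ j * e j) * av d₂ e x + av d₁ e x * (∑ j, D₂ j * e j))) /
        (av d₁ e x * av d₂ e x) ^ 2) x v := by
  have hψ := hld_sub (hld_const (x := x) (v := v) 1) (hld_sv h₁ h₂)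
  have hab := hld_mul (hld_av (e := e) h₁) (hld_av (e := e) h₂)
  have := hld_div hψ hab (mul_ne_zero ha hb)
  exact this

lemma fxy_eq_gv (ha : 0 < av d₁ e q) (hb : 0 < av d₂ e q) :
    Fxy d₁ d₂ e q = Gv d₁ d₂ e q := by
  have h1 : (1 : ℝ) - (1 - dot3 (d₁ q) e) = av d₁ e q := by simp [av]
  have h2 : (1 : ℝ) - (1 - dot3 (d₂ q) e) = av d₂ e q := by simp [av]
  unfold Fxy Phi Gv
  rw [h1, h2]
  rw [show -Real.log (av d₁ e q) - Real.log (av d₂ e q)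
      = -(Real.log (av d₁ e q) + Real.log (av d₂ e q)) by ring,
    Real.exp_neg, Real.exp_add, Real.exp_log ha, Real.exp_log hb]
  unfold sv
  rw [mul_comm, div_eq_mul_inv]

lemma exp_neg_phi (ha : 0 < av d₁ e q) (hb : 0 < av d₂ e q) :
    Real.exp (-(Phi d₁ d₂ e q)) = av d₁ e q * av d₂ e q := by
  have h1 : (1 : ℝ) - (1 - dot3 (d₁ q) e) = av d₁ e q := by simp [av]
  have h2 : (1 : ℝ) - (1 - dot3 (d₂ q) e) = av d₂ e q := by simp [av]
  unfold Phi
  rw [h1, h2]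
  rw [show -(-Real.log (av d₁ e q) - Real.log (av d₂ e q))
      = Real.log (av d₁ e q) + Real.log (av d₂ e q) by ring,
    Real.exp_add, Real.exp_log ha, Real.exp_log hb]

end LDAux


lemma cs3 (u1 u2 u3 v1 v2 v3 : ℝ) :
    (u1*v1+u2*v2+u3*v3)^2 ≤ (u1^2+u2^2+u3^2)*(v1^2+v2^2+v3^2) := by
  nlinarith [sq_nonneg (u1*v2-u2*v1), sq_nonneg (u1*v3-u3*v1), sq_nonneg (u2*v3-u3*v2)]

lemma quad_ineq (S w P Q psi : ℝ) (hS : 0 ≤ S) (hpsi : 0 ≤ psi) (hw : w^2 ≤ 2*psi*S) :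
    0 ≤ S - w*(P+Q) + psi*(P^2+Q^2) := by
  have h1 : (w*(P+Q))^2 ≤ (S + psi*(P+Q)^2/2)^2 := by
    nlinarith [sq_nonneg (S - psi*(P+Q)^2/2), mul_nonneg hpsi (sq_nonneg (P+Q)),
      mul_le_mul_of_nonneg_right hw (sq_nonneg (P+Q))]
  have h2 : w*(P+Q) ≤ S + psi*(P+Q)^2/2 := by
    nlinarith [sq_nonneg (w*(P+Q) - (S + psi*(P+Q)^2/2)), mul_nonneg hpsi (sq_nonneg (P+Q))]
  nlinarith [mul_nonneg hpsi (sq_nonneg (P-Q))]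

end Aux
set_option maxHeartbeats 4000000 in
/-- For two hemisphere-valued solutions `d₁, d₂` of the flow with field `λ(t)e`, the
function `e^Φ ψ` is a supersolution: `L(e^Φ ψ) = ∇·(e^{−Φ}∇(e^Φψ)) − e^{−Φ}∂ₜ(e^Φψ) ≥ 0`. -/
theorem statement10 (Ω : Set (Fin 3 → ℝ)) (hΩ : IsOpen Ω) (T : ℝ) (hT : 0 < T)
    (e : Fin 3 → ℝ) (he : dot3 e e = 1)
    (lam : ℝ → ℝ) (hlam : ContinuousOn lam (Set.Ioo 0 T))
    (d₁ d₂ : SpaceTime → Fin 3 → ℝ)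
    (hd₁ : ∀ i : Fin 3, IsC2On (fun p => d₁ p i) (Ω ×ˢ Set.Ioo 0 T))
    (hd₂ : ∀ i : Fin 3, IsC2On (fun p => d₂ p i) (Ω ×ˢ Set.Ioo 0 T))
    (hunit₁ : ∀ p ∈ Ω ×ˢ Set.Ioo 0 T, dot3 (d₁ p) (d₁ p) = 1)
    (hunit₂ : ∀ p ∈ Ω ×ˢ Set.Ioo 0 T, dot3 (d₂ p) (d₂ p) = 1)
    (hpos₁ : ∀ p ∈ Ω ×ˢ Set.Ioo 0 T, 0 < dot3 (d₁ p) e)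
    (hpos₂ : ∀ p ∈ Ω ×ˢ Set.Ioo 0 T, 0 < dot3 (d₂ p) e)
    (heq₁ : ∀ p ∈ Ω ×ˢ Set.Ioo 0 T, ∀ i : Fin 3,
      pt (fun q => d₁ q i) p - lap (fun q => d₁ q i) p =
        gradSq d₁ p * d₁ p i + (lam p.2) ^ 2 * dot3 e (d₁ p) * e i
          - (lam p.2) ^ 2 * (dot3 e (d₁ p)) ^ 2 * d₁ p i)
    (heq₂ : ∀ p ∈ Ω ×ˢ Set.Ioo 0 T, ∀ i : Fin 3,
      pt (fun q => d₂ q i) p - lap (fun q => d₂ q i) p =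
        gradSq d₂ p * d₂ p i + (lam p.2) ^ 2 * dot3 e (d₂ p) * e i
          - (lam p.2) ^ 2 * (dot3 e (d₂ p)) ^ 2 * d₂ p i) :
    ∀ p ∈ Ω ×ˢ Set.Ioo 0 T,
      0 ≤ (∑ k, px k (fun q => Real.exp (-(Phi d₁ d₂ e q)) * px k (Fxy d₁ d₂ e) q) p)
            - Real.exp (-(Phi d₁ d₂ e p)) * pt (Fxy d₁ d₂ e) p := by
  intro p hp
  have hUopen : IsOpen (Ω ×ˢ Set.Ioo 0 T) := hΩ.prod isOpen_Ioo
  have hpU : p ∈ Ω ×ˢ Set.Ioo 0 T := hp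
  have hapos : ∀ q ∈ Ω ×ˢ Set.Ioo 0 T, 0 < av d₁ e q := fun q hq => hpos₁ q hq
  have hbpos : ∀ q ∈ Ω ×ˢ Set.Ioo 0 T, 0 < av d₂ e q := fun q hq => hpos₂ q hq
  have ha := hapos p hpU
  have hb := hbpos p hpU
  -- first spatial derivatives of components
  have hB1 : ∀ q ∈ Ω ×ˢ Set.Ioo 0 T, ∀ (k j : Fin 3), HasLineDerivAt ℝ (fun q' => d₁ q' j)
      (px k (fun q' => d₁ q' j) q) q (Pi.single k 1, (0:ℝ)) :=
    fun q hq k j => (((hd₁ j).2.2.2.1 k).1 q hq).hasLineDerivAt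
  have hB2 : ∀ q ∈ Ω ×ˢ Set.Ioo 0 T, ∀ (k j : Fin 3), HasLineDerivAt ℝ (fun q' => d₂ q' j)
      (px k (fun q' => d₂ q' j) q) q (Pi.single k 1, (0:ℝ)) :=
    fun q hq k j => (((hd₂ j).2.2.2.1 k).1 q hq).hasLineDerivAt
  -- second spatial derivatives
  have hC1 : ∀ q ∈ Ω ×ˢ Set.Ioo 0 T, ∀ (k l j : Fin 3),
      HasLineDerivAt ℝ (fun q' => px l (fun q'' => d₁ q'' j) q')
      (px k (px l (fun q'' => d₁ q'' j)) q) q (Pi.single k 1, (0:ℝ)) :=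
    fun q hq k l j => (((hd₁ j).2.2.2.2 k l).1 q hq).hasLineDerivAt
  have hC2 : ∀ q ∈ Ω ×ˢ Set.Ioo 0 T, ∀ (k l j : Fin 3),
      HasLineDerivAt ℝ (fun q' => px l (fun q'' => d₂ q'' j) q')
      (px k (px l (fun q'' => d₂ q'' j)) q) q (Pi.single k 1, (0:ℝ)) :=
    fun q hq k l j => (((hd₂ j).2.2.2.2 k l).1 q hq).hasLineDerivAt
  -- time derivatives
  have hT1 : ∀ q ∈ Ω ×ˢ Set.Ioo 0 T, ∀ j : Fin 3, HasLineDerivAt ℝ (fun q' => d₁ q' j)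
      (pt (fun q' => d₁ q' j) q) q ((0 : Fin 3 → ℝ), (1:ℝ)) :=
    fun q hq j => ((hd₁ j).2.1 q hq).hasLineDerivAt
  have hT2 : ∀ q ∈ Ω ×ˢ Set.Ioo 0 T, ∀ j : Fin 3, HasLineDerivAt ℝ (fun q' => d₂ q' j)
      (pt (fun q' => d₂ q' j) q) q ((0 : Fin 3 → ℝ), (1:ℝ)) :=
    fun q hq j => ((hd₂ j).2.1 q hq).hasLineDerivAt
  -- Fxy = Gv on U
  have hFeq : Fxy d₁ d₂ e =ᶠ[nhds p] Gv d₁ d₂ e :=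
    Filter.eventuallyEq_of_mem (hUopen.mem_nhds hpU)
      (fun r hr => LDAux.fxy_eq_gv (hapos r hr) (hbpos r hr))
  -- key pointwise identity
  have key1 : ∀ (k : Fin 3), ∀ q ∈ Ω ×ˢ Set.Ioo 0 T,
      Real.exp (-(Phi d₁ d₂ e q)) * px k (Fxy d₁ d₂ e) q = Hv d₁ d₂ e k q := by
    intro k q hq
    have haq := hapos q hq
    have hbq := hbpos q hq
    have hG := LDAux.hld_Gv (e := e) (fun j => hB1 q hq k j) (fun j => hB2 q hq k j)
      haq.ne' hbq.ne'
    have hFeq' : Fxy d₁ d₂ e =ᶠ[nhds q] Gv d₁ d₂ e :=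
      Filter.eventuallyEq_of_mem (hUopen.mem_nhds hq)
        (fun r hr => LDAux.fxy_eq_gv (hapos r hr) (hbpos r hr))
    have h1 : px k (Fxy d₁ d₂ e) q = px k (Gv d₁ d₂ e) q := hFeq'.lineDeriv_eq
    have h2 : px k (Gv d₁ d₂ e) q = _ := hG.lineDeriv
    rw [h1, h2, LDAux.exp_neg_phi haq hbq]
    unfold Hv
    field_simp
  have hsum_eq : ∀ k : Fin 3,
      px k (fun q => Real.exp (-(Phi d₁ d₂ e q)) * px k (Fxy d₁ d₂ e) q) p
        = px k (Hv d₁ d₂ e k) p := by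
    intro k
    have hev : (fun q => Real.exp (-(Phi d₁ d₂ e q)) * px k (Fxy d₁ d₂ e) q)
        =ᶠ[nhds p] Hv d₁ d₂ e k :=
      Filter.eventuallyEq_of_mem (hUopen.mem_nhds hpU) (fun r hr => key1 k r hr)
    exact hev.lineDeriv_eq
  -- time derivative of Fxy at p
  have hptF : pt (Fxy d₁ d₂ e) p = pt (Gv d₁ d₂ e) p := hFeq.lineDeriv_eq
  have hGt := LDAux.hld_Gv (e := e) (fun j => hT1 p hpU j) (fun j => hT2 p hpU j) ha.ne' hb.ne'
  have hptG : pt (Gv d₁ d₂ e) p = _ := hGt.lineDeriv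
  -- clean formula for px k (Hv k) p
  have hclean : ∀ k : Fin 3, px k (Hv d₁ d₂ e k) p =
      (-(∑ j, (px k (px k (fun q' => d₁ q' j)) p * d₂ p j
            + d₁ p j * px k (px k (fun q' => d₂ q' j)) p))
        - (1 - sv d₁ d₂ p) * ((∑ j, px k (px k (fun q' => d₁ q' j)) p * e j) / av d₁ e p
            + (∑ j, px k (px k (fun q' => d₂ q' j)) p * e j) / av d₂ e p))
      + ((-2) * ∑ j, px k (fun q' => d₁ q' j) p * px k (fun q' => d₂ q' j) p
        - (0 - ∑ j, (px k (fun q' => d₁ q' j) p * d₂ p j + d₁ p j * px k (fun q' => d₂ q' j) p))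
            * ((∑ j, px k (fun q' => d₁ q' j) p * e j) / av d₁ e p
               + (∑ j, px k (fun q' => d₂ q' j) p * e j) / av d₂ e p)
        + (1 - sv d₁ d₂ p) * (((∑ j, px k (fun q' => d₁ q' j) p * e j) / av d₁ e p)^2
             + ((∑ j, px k (fun q' => d₂ q' j) p * e j) / av d₂ e p)^2)) := by
    intro k
    have hA1 : ∀ j : Fin 3, HasLineDerivAt ℝ (fun q' => d₁ q' j)
        (px k (fun q' => d₁ q' j) p) p (Pi.single k 1, (0:ℝ)) := fun j => hB1 p hpU k j
    have hA2 : ∀ j : Fin 3, HasLineDerivAt ℝ (fun q' => d₂ q' j)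
        (px k (fun q' => d₂ q' j) p) p (Pi.single k 1, (0:ℝ)) := fun j => hB2 p hpU k j
    have hBB1 : ∀ j : Fin 3, HasLineDerivAt ℝ (fun q' => px k (fun q'' => d₁ q'' j) q')
        (px k (px k (fun q'' => d₁ q'' j)) p) p (Pi.single k 1, (0:ℝ)) := fun j => hC1 p hpU k k j
    have hBB2 : ∀ j : Fin 3, HasLineDerivAt ℝ (fun q' => px k (fun q'' => d₂ q'' j) q')
        (px k (px k (fun q'' => d₂ q'' j)) p) p (Pi.single k 1, (0:ℝ)) := fun j => hC2 p hpU k k j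
    have hS1 : HasLineDerivAt ℝ
        (fun q => ∑ j, (px k (fun q' => d₁ q' j) q * d₂ q j + d₁ q j * px k (fun q' => d₂ q' j) q))
        (∑ j, ((px k (px k (fun q'' => d₁ q'' j)) p * d₂ p j
            + px k (fun q' => d₁ q' j) p * px k (fun q' => d₂ q' j) p)
          + (px k (fun q' => d₁ q' j) p * px k (fun q' => d₂ q' j) p
            + d₁ p j * px k (px k (fun q'' => d₂ q'' j)) p))) p (Pi.single k 1, (0:ℝ)) :=
      LDAux.hld_sum Finset.univ _ _
        (fun j _ => LDAux.hld_add (LDAux.hld_mul (hBB1 j) (hA2 j)) (LDAux.hld_mul (hA1 j) (hBB2 j)))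
    have hW1 : HasLineDerivAt ℝ (fun q => ∑ j, px k (fun q' => d₁ q' j) q * e j)
        (∑ j, px k (px k (fun q'' => d₁ q'' j)) p * e j) p (Pi.single k 1, (0:ℝ)) :=
      LDAux.hld_sum Finset.univ _ _ (fun j _ => LDAux.hld_mul_const (hBB1 j) (e j))
    have hW2 : HasLineDerivAt ℝ (fun q => ∑ j, px k (fun q' => d₂ q' j) q * e j)
        (∑ j, px k (px k (fun q'' => d₂ q'' j)) p * e j) p (Pi.single k 1, (0:ℝ)) :=
      LDAux.hld_sum Finset.univ _ _ (fun j _ => LDAux.hld_mul_const (hBB2 j) (e j))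
    have hdiv1 := LDAux.hld_div hW1 (LDAux.hld_av (e := e) hA1) ha.ne'
    have hdiv2 := LDAux.hld_div hW2 (LDAux.hld_av (e := e) hA2) hb.ne'
    have hpsi := LDAux.hld_sub (LDAux.hld_const (x := p) (v := (Pi.single k 1, (0:ℝ))) 1)
      (LDAux.hld_sv hA1 hA2)
    have hmain := LDAux.hld_sub
      (LDAux.hld_sub (LDAux.hld_const (x := p) (v := (Pi.single k 1, (0:ℝ))) 0) hS1)
      (LDAux.hld_mul hpsi (LDAux.hld_add hdiv1 hdiv2))
    have hHk : HasLineDerivAt ℝ (Hv d₁ d₂ e k) _ p (Pi.single k 1, (0:ℝ)) := hmain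
    have hval : px k (Hv d₁ d₂ e k) p = _ := hHk.lineDeriv
    rw [hval]
    simp only [Finset.sum_add_distrib]
    field_simp
    ring
  -- PDE substitution lemmas
  have hpt1 : ∀ j : Fin 3, pt (fun q => d₁ q j) p =
      (∑ k, px k (px k (fun q => d₁ q j)) p)
      + (gradSq d₁ p * d₁ p j + (lam p.2) ^ 2 * dot3 e (d₁ p) * e j
          - (lam p.2) ^ 2 * (dot3 e (d₁ p)) ^ 2 * d₁ p j) := by
    intro j
    have h := heq₁ p hp j
    simp only [lap] at h
    linarith
  have hpt2 : ∀ j : Fin 3, pt (fun q => d₂ q j) p =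
      (∑ k, px k (px k (fun q => d₂ q j)) p)
      + (gradSq d₂ p * d₂ p j + (lam p.2) ^ 2 * dot3 e (d₂ p) * e j
          - (lam p.2) ^ 2 * (dot3 e (d₂ p)) ^ 2 * d₂ p j) := by
    intro j
    have h := heq₂ p hp j
    simp only [lap] at h
    linarith
  have ha3 : d₁ p 0 * e 0 + d₁ p 1 * e 1 + d₁ p 2 * e 2 ≠ 0 := by
    have := hapos p hpU
    simp only [av, dot3, Fin.sum_univ_three] at this
    exact this.ne'
  have hb3 : d₂ p 0 * e 0 + d₂ p 1 * e 1 + d₂ p 2 * e 2 ≠ 0 := by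
    have := hbpos p hpU
    simp only [av, dot3, Fin.sum_univ_three] at this
    exact this.ne'
  have haa : dot3 e (d₁ p) = av d₁ e p := by
    simp only [dot3, av, Fin.sum_univ_three]; ring
  have hbb : dot3 e (d₂ p) = av d₂ e p := by
    simp only [dot3, av, Fin.sum_univ_three]; ring
  -- time-derivative identity in `Hv`-like shape
  have hPT : Real.exp (-(Phi d₁ d₂ e p)) * pt (Fxy d₁ d₂ e) p
      = (0 - ∑ j, (pt (fun q' => d₁ q' j) p * d₂ p j + d₁ p j * pt (fun q' => d₂ q' j) p))
        - (1 - sv d₁ d₂ p) * ((∑ j, pt (fun q' => d₁ q' j) p * e j) / av d₁ e p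
            + (∑ j, pt (fun q' => d₂ q' j) p * e j) / av d₂ e p) := by
    rw [LDAux.exp_neg_phi ha hb, hptF, hptG]
    field_simp
  -- the grand algebraic identity
  have hGRAND : (∑ k, px k (Hv d₁ d₂ e k) p)
      - Real.exp (-(Phi d₁ d₂ e p)) * pt (Fxy d₁ d₂ e) p
    = (∑ k : Fin 3,
        ((∑ j, (px k (fun q' => d₁ q' j) p - px k (fun q' => d₂ q' j) p)^2)
         - (0 - ∑ j, (px k (fun q' => d₁ q' j) p * d₂ p j + d₁ p j * px k (fun q' => d₂ q' j) p))
             * ((∑ j, px k (fun q' => d₁ q' j) p * e j) / av d₁ e p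
                + (∑ j, px k (fun q' => d₂ q' j) p * e j) / av d₂ e p)
         + (1 - sv d₁ d₂ p) * (((∑ j, px k (fun q' => d₁ q' j) p * e j) / av d₁ e p)^2
              + ((∑ j, px k (fun q' => d₂ q' j) p * e j) / av d₂ e p)^2)))
      + (lam p.2)^2 * (2 * (1 - sv d₁ d₂ p) * dot3 e e - (av d₁ e p - av d₂ e p)^2) := by
    have hpt1 : ∀ j : Fin 3, pt (fun q => d₁ q j) p =
        (∑ k, px k (px k (fun q => d₁ q j)) p)
        + (gradSq d₁ p * d₁ p j + (lam p.2) ^ 2 * av d₁ e p * e j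
            - (lam p.2) ^ 2 * (av d₁ e p) ^ 2 * d₁ p j) := by
      intro j
      have h := heq₁ p hp j
      simp only [lap] at h
      rw [haa] at h
      linarith
    have hpt2 : ∀ j : Fin 3, pt (fun q => d₂ q j) p =
        (∑ k, px k (px k (fun q => d₂ q j)) p)
        + (gradSq d₂ p * d₂ p j + (lam p.2) ^ 2 * av d₂ e p * e j
            - (lam p.2) ^ 2 * (av d₂ e p) ^ 2 * d₂ p j) := by
      intro j
      have h := heq₂ p hp j
      simp only [lap] at h
      rw [hbb] at h
      linarith
    -- middle identity: second-order terms cancel against the time derivative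
    have hMID : (∑ k : Fin 3,
        (-(∑ j, (px k (px k (fun q' => d₁ q' j)) p * d₂ p j
              + d₁ p j * px k (px k (fun q' => d₂ q' j)) p))
          - (1 - sv d₁ d₂ p) * ((∑ j, px k (px k (fun q' => d₁ q' j)) p * e j) / av d₁ e p
              + (∑ j, px k (px k (fun q' => d₂ q' j)) p * e j) / av d₂ e p)))
        - ((0 - ∑ j, (pt (fun q' => d₁ q' j) p * d₂ p j + d₁ p j * pt (fun q' => d₂ q' j) p))
          - (1 - sv d₁ d₂ p) * ((∑ j, pt (fun q' => d₁ q' j) p * e j) / av d₁ e p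
              + (∑ j, pt (fun q' => d₂ q' j) p * e j) / av d₂ e p))
      = (∑ j, ((gradSq d₁ p * d₁ p j + (lam p.2) ^ 2 * av d₁ e p * e j
              - (lam p.2) ^ 2 * (av d₁ e p) ^ 2 * d₁ p j) * d₂ p j
            + d₁ p j * (gradSq d₂ p * d₂ p j + (lam p.2) ^ 2 * av d₂ e p * e j
              - (lam p.2) ^ 2 * (av d₂ e p) ^ 2 * d₂ p j)))
        + (1 - sv d₁ d₂ p) *
            ((∑ j, (gradSq d₁ p * d₁ p j + (lam p.2) ^ 2 * av d₁ e p * e j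
                - (lam p.2) ^ 2 * (av d₁ e p) ^ 2 * d₁ p j) * e j) / av d₁ e p
             + (∑ j, (gradSq d₂ p * d₂ p j + (lam p.2) ^ 2 * av d₂ e p * e j
                - (lam p.2) ^ 2 * (av d₂ e p) ^ 2 * d₂ p j) * e j) / av d₂ e p) := by
      simp only [hpt1, hpt2]
      simp only [Fin.sum_univ_three]
      ring
    -- the reaction-term computation
    have hC : (∑ j, ((gradSq d₁ p * d₁ p j + (lam p.2) ^ 2 * av d₁ e p * e j
              - (lam p.2) ^ 2 * (av d₁ e p) ^ 2 * d₁ p j) * d₂ p j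
            + d₁ p j * (gradSq d₂ p * d₂ p j + (lam p.2) ^ 2 * av d₂ e p * e j
              - (lam p.2) ^ 2 * (av d₂ e p) ^ 2 * d₂ p j)))
        + (1 - sv d₁ d₂ p) *
            ((∑ j, (gradSq d₁ p * d₁ p j + (lam p.2) ^ 2 * av d₁ e p * e j
                - (lam p.2) ^ 2 * (av d₁ e p) ^ 2 * d₁ p j) * e j) / av d₁ e p
             + (∑ j, (gradSq d₂ p * d₂ p j + (lam p.2) ^ 2 * av d₂ e p * e j
                - (lam p.2) ^ 2 * (av d₂ e p) ^ 2 * d₂ p j) * e j) / av d₂ e p)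
      = gradSq d₁ p + gradSq d₂ p
        + (lam p.2)^2 * (2 * (1 - sv d₁ d₂ p) * dot3 e e - (av d₁ e p - av d₂ e p)^2) := by
      have ha' : av d₁ e p ≠ 0 := ha.ne'
      have hb' : av d₂ e p ≠ 0 := hb.ne'
      simp only [sv, dot3, Fin.sum_univ_three]
      rw [show av d₁ e p = d₁ p 0 * e 0 + d₁ p 1 * e 1 + d₁ p 2 * e 2 by
            simp [av, dot3, Fin.sum_univ_three],
          show av d₂ e p = d₂ p 0 * e 0 + d₂ p 1 * e 1 + d₂ p 2 * e 2 by
            simp [av, dot3, Fin.sum_univ_three]]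
      rw [div_add_div _ _ ha3 hb3, ← mul_div_assoc, add_div' _ _ _ (mul_ne_zero ha3 hb3),
        div_eq_iff (mul_ne_zero ha3 hb3)]
      ring
    -- per-k: gradient square decomposition
    have hD : ∀ k : Fin 3,
        ((∑ j, (px k (fun q' => d₁ q' j) p - px k (fun q' => d₂ q' j) p)^2)
         - (0 - ∑ j, (px k (fun q' => d₁ q' j) p * d₂ p j + d₁ p j * px k (fun q' => d₂ q' j) p))
             * ((∑ j, px k (fun q' => d₁ q' j) p * e j) / av d₁ e p
                + (∑ j, px k (fun q' => d₂ q' j) p * e j) / av d₂ e p)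
         + (1 - sv d₁ d₂ p) * (((∑ j, px k (fun q' => d₁ q' j) p * e j) / av d₁ e p)^2
              + ((∑ j, px k (fun q' => d₂ q' j) p * e j) / av d₂ e p)^2))
      = ((-2) * ∑ j, px k (fun q' => d₁ q' j) p * px k (fun q' => d₂ q' j) p
        - (0 - ∑ j, (px k (fun q' => d₁ q' j) p * d₂ p j + d₁ p j * px k (fun q' => d₂ q' j) p))
            * ((∑ j, px k (fun q' => d₁ q' j) p * e j) / av d₁ e p
               + (∑ j, px k (fun q' => d₂ q' j) p * e j) / av d₂ e p)
        + (1 - sv d₁ d₂ p) * (((∑ j, px k (fun q' => d₁ q' j) p * e j) / av d₁ e p)^2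
             + ((∑ j, px k (fun q' => d₂ q' j) p * e j) / av d₂ e p)^2))
        + (∑ j, ((px k (fun q' => d₁ q' j) p)^2 + (px k (fun q' => d₂ q' j) p)^2)) := by
      intro k
      simp only [Fin.sum_univ_three]
      ring
    have hgr : (∑ k : Fin 3, ∑ j : Fin 3,
        ((px k (fun q' => d₁ q' j) p)^2 + (px k (fun q' => d₂ q' j) p)^2))
        = gradSq d₁ p + gradSq d₂ p := by
      simp only [gradSq, Fin.sum_univ_three]
      ring
    have hDsum : (∑ k : Fin 3,
        ((∑ j, (px k (fun q' => d₁ q' j) p - px k (fun q' => d₂ q' j) p)^2)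
         - (0 - ∑ j, (px k (fun q' => d₁ q' j) p * d₂ p j + d₁ p j * px k (fun q' => d₂ q' j) p))
             * ((∑ j, px k (fun q' => d₁ q' j) p * e j) / av d₁ e p
                + (∑ j, px k (fun q' => d₂ q' j) p * e j) / av d₂ e p)
         + (1 - sv d₁ d₂ p) * (((∑ j, px k (fun q' => d₁ q' j) p * e j) / av d₁ e p)^2
              + ((∑ j, px k (fun q' => d₂ q' j) p * e j) / av d₂ e p)^2)))
      = (∑ k : Fin 3,
          ((-2) * ∑ j, px k (fun q' => d₁ q' j) p * px k (fun q' => d₂ q' j) p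
          - (0 - ∑ j, (px k (fun q' => d₁ q' j) p * d₂ p j + d₁ p j * px k (fun q' => d₂ q' j) p))
              * ((∑ j, px k (fun q' => d₁ q' j) p * e j) / av d₁ e p
                 + (∑ j, px k (fun q' => d₂ q' j) p * e j) / av d₂ e p)
          + (1 - sv d₁ d₂ p) * (((∑ j, px k (fun q' => d₁ q' j) p * e j) / av d₁ e p)^2
               + ((∑ j, px k (fun q' => d₂ q' j) p * e j) / av d₂ e p)^2)))
        + (gradSq d₁ p + gradSq d₂ p) := by
      rw [Finset.sum_congr rfl (fun k _ => hD k), Finset.sum_add_distrib, hgr]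
    rw [Finset.sum_congr rfl (fun k _ => hclean k), hPT, Finset.sum_add_distrib]
    linear_combination hMID + hC - hDsum
  rw [Finset.sum_congr rfl (fun k _ => hsum_eq k), hGRAND]
  apply add_nonneg
  · apply Finset.sum_nonneg
    intro k _
    have hA1 : ∀ j : Fin 3, HasLineDerivAt ℝ (fun q' => d₁ q' j)
        (px k (fun q' => d₁ q' j) p) p (Pi.single k 1, (0:ℝ)) := fun j => hB1 p hpU k j
    have hA2 : ∀ j : Fin 3, HasLineDerivAt ℝ (fun q' => d₂ q' j)
        (px k (fun q' => d₂ q' j) p) p (Pi.single k 1, (0:ℝ)) := fun j => hB2 p hpU k j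
    have ho1 : ∑ j, (px k (fun q' => d₁ q' j) p * d₁ p j + d₁ p j * px k (fun q' => d₁ q' j) p)
        = 0 := by
      have hone : HasLineDerivAt ℝ (sv d₁ d₁) 0 p (Pi.single k 1, (0:ℝ)) := by
        have hev : sv d₁ d₁ =ᶠ[nhds p] (fun _ => 1) :=
          Filter.eventuallyEq_of_mem (hUopen.mem_nhds hpU) (fun r hr => hunit₁ r hr)
        exact LDAux.hld_congr_nhds hev (LDAux.hld_const 1)
      exact (hone.unique (LDAux.hld_sv hA1 hA1)).symm
    have ho2 : ∑ j, (px k (fun q' => d₂ q' j) p * d₂ p j + d₂ p j * px k (fun q' => d₂ q' j) p)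
        = 0 := by
      have hone : HasLineDerivAt ℝ (sv d₂ d₂) 0 p (Pi.single k 1, (0:ℝ)) := by
        have hev : sv d₂ d₂ =ᶠ[nhds p] (fun _ => 1) :=
          Filter.eventuallyEq_of_mem (hUopen.mem_nhds hpU) (fun r hr => hunit₂ r hr)
        exact LDAux.hld_congr_nhds hev (LDAux.hld_const 1)
      exact (hone.unique (LDAux.hld_sv hA2 hA2)).symm
    have hu1 := hunit₁ p hp
    have hu2 := hunit₂ p hp
    simp only [dot3, Fin.sum_univ_three] at hu1 hu2
    simp only [Fin.sum_univ_three] at ho1 ho2 ⊢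
    -- abbreviations (as plain terms)
    have hψ : 0 ≤ 1 - (d₁ p 0 * d₂ p 0 + d₁ p 1 * d₂ p 1 + d₁ p 2 * d₂ p 2) := by
      nlinarith [sq_nonneg (d₁ p 0 - d₂ p 0), sq_nonneg (d₁ p 1 - d₂ p 1),
        sq_nonneg (d₁ p 2 - d₂ p 2)]
    have hX : (d₁ p 0 - d₂ p 0)^2 + (d₁ p 1 - d₂ p 1)^2 + (d₁ p 2 - d₂ p 2)^2
        = 2 - 2*(d₁ p 0 * d₂ p 0 + d₁ p 1 * d₂ p 1 + d₁ p 2 * d₂ p 2) := by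
      linear_combination hu1 + hu2
    have hcs := cs3 (px k (fun q' => d₁ q' 0) p - px k (fun q' => d₂ q' 0) p)
      (px k (fun q' => d₁ q' 1) p - px k (fun q' => d₂ q' 1) p)
      (px k (fun q' => d₁ q' 2) p - px k (fun q' => d₂ q' 2) p)
      (d₁ p 0 - d₂ p 0) (d₁ p 1 - d₂ p 1) (d₁ p 2 - d₂ p 2)
    rw [hX] at hcs
    have hS : (0:ℝ) ≤ (px k (fun q' => d₁ q' 0) p - px k (fun q' => d₂ q' 0) p)^2
        + (px k (fun q' => d₁ q' 1) p - px k (fun q' => d₂ q' 1) p)^2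
        + (px k (fun q' => d₁ q' 2) p - px k (fun q' => d₂ q' 2) p)^2 := by positivity
    have hw2 : ((px k (fun q' => d₁ q' 0) p - px k (fun q' => d₂ q' 0) p) * (d₁ p 0 - d₂ p 0)
        + (px k (fun q' => d₁ q' 1) p - px k (fun q' => d₂ q' 1) p) * (d₁ p 1 - d₂ p 1)
        + (px k (fun q' => d₁ q' 2) p - px k (fun q' => d₂ q' 2) p) * (d₁ p 2 - d₂ p 2))^2
        ≤ 2 * (1 - (d₁ p 0 * d₂ p 0 + d₁ p 1 * d₂ p 1 + d₁ p 2 * d₂ p 2))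
          * ((px k (fun q' => d₁ q' 0) p - px k (fun q' => d₂ q' 0) p)^2
            + (px k (fun q' => d₁ q' 1) p - px k (fun q' => d₂ q' 1) p)^2
            + (px k (fun q' => d₁ q' 2) p - px k (fun q' => d₂ q' 2) p)^2) := by
      nlinarith [hcs]
    have hquad := quad_ineq _
      ((px k (fun q' => d₁ q' 0) p - px k (fun q' => d₂ q' 0) p) * (d₁ p 0 - d₂ p 0)
        + (px k (fun q' => d₁ q' 1) p - px k (fun q' => d₂ q' 1) p) * (d₁ p 1 - d₂ p 1)
        + (px k (fun q' => d₁ q' 2) p - px k (fun q' => d₂ q' 2) p) * (d₁ p 2 - d₂ p 2))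
      ((px k (fun q' => d₁ q' 0) p * e 0 + px k (fun q' => d₁ q' 1) p * e 1
          + px k (fun q' => d₁ q' 2) p * e 2) / av d₁ e p)
      ((px k (fun q' => d₂ q' 0) p * e 0 + px k (fun q' => d₂ q' 1) p * e 1
          + px k (fun q' => d₂ q' 2) p * e 2) / av d₂ e p)
      (1 - (d₁ p 0 * d₂ p 0 + d₁ p 1 * d₂ p 1 + d₁ p 2 * d₂ p 2)) hS hψ hw2
    have hsv : sv d₁ d₂ p = d₁ p 0 * d₂ p 0 + d₁ p 1 * d₂ p 1 + d₁ p 2 * d₂ p 2 := by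
      simp [sv, dot3, Fin.sum_univ_three]
    rw [hsv]
    refine le_trans hquad (le_of_eq ?_)
    linear_combination (-((px k (fun q' => d₁ q' 0) p * e 0 + px k (fun q' => d₁ q' 1) p * e 1
          + px k (fun q' => d₁ q' 2) p * e 2) / av d₁ e p
        + (px k (fun q' => d₂ q' 0) p * e 0 + px k (fun q' => d₂ q' 1) p * e 1
          + px k (fun q' => d₂ q' 2) p * e 2) / av d₂ e p) / 2) * ho1
      + (-((px k (fun q' => d₁ q' 0) p * e 0 + px k (fun q' => d₁ q' 1) p * e 1
          + px k (fun q' => d₁ q' 2) p * e 2) / av d₁ e p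
        + (px k (fun q' => d₂ q' 0) p * e 0 + px k (fun q' => d₂ q' 1) p * e 1
          + px k (fun q' => d₂ q' 2) p * e 2) / av d₂ e p) / 2) * ho2
  · apply mul_nonneg (sq_nonneg _)
    have hu1 := hunit₁ p hp
    have hu2 := hunit₂ p hp
    simp only [dot3, Fin.sum_univ_three] at hu1 hu2
    have hX : (d₁ p 0 - d₂ p 0)^2 + (d₁ p 1 - d₂ p 1)^2 + (d₁ p 2 - d₂ p 2)^2
        = 2 - 2*(d₁ p 0 * d₂ p 0 + d₁ p 1 * d₂ p 1 + d₁ p 2 * d₂ p 2) := by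
      linear_combination hu1 + hu2
    have hcs := cs3 (d₁ p 0 - d₂ p 0) (d₁ p 1 - d₂ p 1) (d₁ p 2 - d₂ p 2) (e 0) (e 1) (e 2)
    rw [hX] at hcs
    simp only [sv, av, dot3, Fin.sum_univ_three]
    nlinarith [hcs]
end
end

section
/- Let e, d₁, d₂ ∈ ℝ³ be unit vectors with d₁·e ≠ 0 and d₂·e ≠ 0, and let λ ∈ ℝ. Define ∂V(d) = λ²(e·d)e − λ²(e·d)²d for d ∈ ℝ³, and ψ = 1 − d₁·d₂. Then ∂V(d₁)·d₂ + ∂V(d₂)·d₁ + ψ·[(∂V(d₁)·e)/(d₁·e) + (∂V(d₂)·e)/(d₂·e)] = λ²(|d₁ − d₂|² − (e·(d₁ − d₂))²) ≥ 0. -/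
/-- Constrained first variation of the magnetic potential:
`∂V(d) = λ²(e·d)e − λ²(e·d)²d`. -/
noncomputable def dV (lam : ℝ) (e d : Fin 3 → ℝ) : Fin 3 → ℝ :=
  fun i => lam ^ 2 * dot3 e d * e i - lam ^ 2 * (dot3 e d) ^ 2 * d i

lemma dot3_expand (a b : Fin 3 → ℝ) :
    dot3 a b = a 0 * b 0 + a 1 * b 1 + a 2 * b 2 := by
  simp [dot3, Fin.sum_univ_three]

lemma dot3_dV (lam : ℝ) (e d x : Fin 3 → ℝ) :
    dot3 (dV lam e d) x
      = lam ^ 2 * dot3 e d * dot3 e x - lam ^ 2 * (dot3 e d) ^ 2 * dot3 d x := by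
  simp only [dot3_expand, dV]; ring

lemma dot3_comm (a b : Fin 3 → ℝ) : dot3 a b = dot3 b a := by
  simp only [dot3_expand]; ring

lemma dot3_sub (a b c : Fin 3 → ℝ) :
    dot3 (a - b) c = dot3 a c - dot3 b c := by
  simp only [dot3_expand, Pi.sub_apply]; ring

/-- The key algebraic identity and sign condition for the potential terms in the
time-derivative estimate. -/
theorem statement11 (e d₁ d₂ : Fin 3 → ℝ) (lam : ℝ)
    (he : dot3 e e = 1) (h₁ : dot3 d₁ d₁ = 1) (h₂ : dot3 d₂ d₂ = 1)
    (h₁e : dot3 d₁ e ≠ 0) (h₂e : dot3 d₂ e ≠ 0) :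
    dot3 (dV lam e d₁) d₂ + dot3 (dV lam e d₂) d₁
        + (1 - dot3 d₁ d₂) * (dot3 (dV lam e d₁) e / dot3 d₁ e
            + dot3 (dV lam e d₂) e / dot3 d₂ e) =
      lam ^ 2 * (dot3 (d₁ - d₂) (d₁ - d₂) - (dot3 e (d₁ - d₂)) ^ 2) ∧
    0 ≤ lam ^ 2 * (dot3 (d₁ - d₂) (d₁ - d₂) - (dot3 e (d₁ - d₂)) ^ 2) := by
  have hs : dot3 (d₁ - d₂) (d₁ - d₂)
      = dot3 d₁ d₁ - 2 * dot3 d₁ d₂ + dot3 d₂ d₂ := by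
    simp only [dot3_expand, Pi.sub_apply]; ring
  have hed : dot3 e (d₁ - d₂) = dot3 e d₁ - dot3 e d₂ := by
    simp only [dot3_expand, Pi.sub_apply]; ring
  constructor
  · rw [hs, hed, h₁, h₂, dot3_dV, dot3_dV, dot3_dV, dot3_dV, he,
      dot3_comm d₁ e, dot3_comm d₂ e, dot3_comm d₂ d₁, dot3_comm d₁ d₂] at *
    set a := dot3 e d₁ with ha
    set b := dot3 e d₂ with hb
    field_simp
    ring
  · rw [hs, hed, h₁, h₂]
    have hcs : (dot3 e d₁ - dot3 e d₂) ^ 2 ≤ 1 - 2 * dot3 d₁ d₂ + 1 := by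
      simp only [dot3_expand] at *
      nlinarith [sq_nonneg (e 0 * (d₁ 1 - d₂ 1) - e 1 * (d₁ 0 - d₂ 0)),
        sq_nonneg (e 0 * (d₁ 2 - d₂ 2) - e 2 * (d₁ 0 - d₂ 0)),
        sq_nonneg (e 1 * (d₁ 2 - d₂ 2) - e 2 * (d₁ 1 - d₂ 1))]
    nlinarith [sq_nonneg lam, hcs]
end
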